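/- arXiv:1904.08078 — 5 statements merged into one kernel-verified Lean document; each statement's English description precedes it below -/
import Mathlib

section
/- Let G be a directed acyclic graph with N vertices and maximum indegree δ, let γ ≥ 1 be an integer, and let G' = IDR(G,γ). If G is (e,d)-reducible, then G' is (e, (δ+γ)·d)-reducible. Moreover G' has (δ+γ)N vertices and maximum indegree 2. -/
/-- `G` is `(e,d)`-reducible: there is a set `S` of at most `e` vertices such that
every directed path avoiding `S` contains fewer than `d` vertices
(i.e. `depth(G - S) < d`). -/
def Reducible {V : Type*} (E : V → V → Prop) (e d : ℕ) : Prop :=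
  ∃ S : Finset V, S.card ≤ e ∧
    ∀ l : List V, l.Chain' E → (∀ v ∈ l, v ∉ S) → l.length < d

/-- The edge relation of the indegree-reduction graph `IDR(G, γ)`.  Each vertex `v`
of `G` is replaced by the directed path `(v,0) → (v,1) → ⋯ → (v, δ+γ-1)`, and for
every edge `(u,v)` of `G` that is the `(ord u v)`-th incoming edge of `v` (under the
fixed ordering `ord` of parents), there is an edge from the last vertex `(u, δ+γ-1)`
of `u`'s path to `(v, ord u v)`. -/
def IDREdge {V : Type*} (E : V → V → Prop) (δ γ : ℕ) (ord : V → V → ℕ) :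
    V × Fin (δ + γ) → V × Fin (δ + γ) → Prop :=
  fun p q =>
    (p.1 = q.1 ∧ (p.2 : ℕ) + 1 = (q.2 : ℕ)) ∨
    (E p.1 q.1 ∧ (p.2 : ℕ) = δ + γ - 1 ∧ (q.2 : ℕ) = ord p.1 q.1)

-- chain' (<) length bound
lemma chain_lt_length_le {l : List ℕ} (h : l.Chain' (· < ·)) {M : ℕ}
    (hb : ∀ x ∈ l, x < M) : l.length ≤ M := by
  have hp : l.Pairwise (· < ·) := List.isChain_iff_pairwise.mp h
  have hnd : l.Nodup := hp.imp (fun h => Nat.ne_of_lt h)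
  have hsub : l.toFinset ⊆ Finset.range M := by
    intro x hx
    simp only [List.mem_toFinset] at hx
    exact Finset.mem_range.mpr (hb x hx)
  calc l.length = l.toFinset.card := (List.toFinset_card_of_nodup hnd).symm
    _ ≤ (Finset.range M).card := Finset.card_le_card hsub
    _ = M := Finset.card_range M

/-- If `G` is a DAG with `N` vertices and maximum indegree `δ`, `γ ≥ 1`,
and `G` is `(e,d)`-reducible, then `G' = IDR(G,γ)` is `(e, (δ+γ)·d)`-reducible; moreover
`G'` has `(δ+γ)·N` vertices and maximum indegree `2`. -/
theorem idr_reducible {V : Type*} [Fintype V] (E : V → V → Prop)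
    (δ γ e d : ℕ) (hγ : 1 ≤ γ)
    (hdag : ∀ v : V, ¬ Relation.TransGen E v v)
    (hindeg : ∀ v : V, {u : V | E u v}.ncard ≤ δ)
    (ord : V → V → ℕ)
    (hord_inj : ∀ v : V, Set.InjOn (fun u => ord u v) {u : V | E u v})
    (hord_lt : ∀ u v : V, E u v → ord u v < δ)
    (hred : Reducible E e d) :
    Reducible (IDREdge E δ γ ord) e ((δ + γ) * d) ∧
    Fintype.card (V × Fin (δ + γ)) = (δ + γ) * Fintype.card V ∧
    ∀ q : V × Fin (δ + γ), {p : V × Fin (δ + γ) | IDREdge E δ γ ord p q}.ncard ≤ 2 := by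
  classical
  set n := δ + γ with hn
  have hn1 : 1 ≤ n := le_add_of_le_right hγ
  obtain ⟨S, hScard, hS⟩ := hred
  have hd1 : 1 ≤ d := by
    have := hS [] List.isChain_nil (by simp)
    simp at this; omega
  refine ⟨?_, ?_, ?_⟩
  · -- reducibility of IDR
    set last : Fin n := ⟨n - 1, by omega⟩ with hlast
    set S' : Finset (V × Fin n) := S.image (fun v => (v, last)) with hS'
    have hmemS' : ∀ p : V × Fin n, p ∈ S' ↔ p.1 ∈ S ∧ p.2 = last := by
      intro p
      simp only [hS', Finset.mem_image]
      constructor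
      · rintro ⟨v, hv, rfl⟩; exact ⟨hv, rfl⟩
      · rintro ⟨h1, h2⟩; exact ⟨p.1, h1, by rw [← h2]⟩
    -- rank function
    set P : V → ℕ → Prop := fun v k =>
      ∃ l : List V, l.Chain' E ∧ (∀ x ∈ l, x ∉ S) ∧ l.getLast? = some v ∧ l.length = k
      with hP
    set r : V → ℕ := fun v => Nat.findGreatest (P v) d with hr
    have hr1 : ∀ v, v ∉ S → 1 ≤ r v := by
      intro v hv
      exact Nat.le_findGreatest hd1 ⟨[v], List.isChain_singleton v, by simpa, rfl, rfl⟩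
    have hrspec : ∀ v, v ∉ S → P v (r v) := by
      intro v hv
      exact Nat.findGreatest_spec hd1 ⟨[v], List.isChain_singleton v, by simpa, rfl, rfl⟩
    have hrd : ∀ v, v ∉ S → r v < d := by
      intro v hv
      obtain ⟨l, hc, hm, _, hlen⟩ := hrspec v hv
      exact hlen ▸ hS l hc hm
    have hrstep : ∀ u v, u ∉ S → v ∉ S → E u v → r u + 1 ≤ r v := by
      intro u v hu hv huv
      obtain ⟨l, hc, hm, hlastl, hlen⟩ := hrspec u hu
      refine Nat.le_findGreatest (by have := hrd u hu; omega) ?_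
      refine ⟨l ++ [v], ?_, ?_, ?_, by simp [hlen]⟩
      · rw [List.Chain', List.isChain_append]
        refine ⟨hc, List.isChain_singleton v, ?_⟩
        intro x hx y hy
        rw [hlastl] at hx
        simp at hx hy
        rw [← hx, ← hy]; exact huv
      · intro x hx
        rcases List.mem_append.mp hx with h | h
        · exact hm x h
        · simp at h; rw [h]; exact hv
      · rw [List.getLast?_append]; simp
    -- weight function
    set w : V × Fin n → ℕ := fun p =>
      if p.1 ∈ S then n * (d - 1) + (p.2 : ℕ) else n * (r p.1 - 1) + (p.2 : ℕ) with hw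
    have hwmono : ∀ p q : V × Fin n, IDREdge E δ γ ord p q →
        p ∉ S' → q ∉ S' → w p < w q := by
      intro p q hpq hp hq
      rcases hpq with ⟨h1, h2⟩ | ⟨hE, hp2, hq2⟩
      · -- within group
        simp only [hw, h1]
        split <;> omega
      · -- crossing edge
        have hpS : p.1 ∉ S := by
          intro hcon
          exact hp ((hmemS' p).mpr ⟨hcon, Fin.ext hp2⟩)
        have ha1 : 1 ≤ r p.1 := hr1 _ hpS
        have had : r p.1 < d := hrd _ hpS
        simp only [hw, if_neg hpS]
        set a := r p.1 with hha
        by_cases hqS : q.1 ∈ S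
        · rw [if_pos hqS]
          have e1 : n * (a - 1) + n = n * a := by
            rw [← Nat.mul_succ]; congr 1; omega
          have e2 : n * a ≤ n * (d - 1) := Nat.mul_le_mul_left n (by omega)
          rw [hp2]
          omega
        · rw [if_neg hqS]
          have hb : a + 1 ≤ r q.1 := hrstep _ _ hpS hqS hE
          have e1 : n * (a - 1) + n = n * a := by
            rw [← Nat.mul_succ]; congr 1; omega
          have e2 : n * a ≤ n * (r q.1 - 1) := Nat.mul_le_mul_left n (by omega)
          rw [hp2]
          omega
    have hwbound : ∀ p : V × Fin n, p ∉ S' → w p < n * d - 1 := by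
      intro p hp
      have hp2 : (p.2 : ℕ) < n := p.2.isLt
      have ed : n * (d - 1) + n = n * d := by
        rw [← Nat.mul_succ]; congr 1; omega
      simp only [hw]
      by_cases hpS : p.1 ∈ S
      · rw [if_pos hpS]
        have hplast : (p.2 : ℕ) ≠ n - 1 := by
          intro hcon
          exact hp ((hmemS' p).mpr ⟨hpS, Fin.ext hcon⟩)
        omega
      · rw [if_neg hpS]
        have ha1 : 1 ≤ r p.1 := hr1 _ hpS
        have had : r p.1 < d := hrd _ hpS
        have e1 : n * (r p.1 - 1) + n = n * (r p.1) := by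
          rw [← Nat.mul_succ]; congr 1; omega
        have e2 : n * (r p.1) ≤ n * (d - 1) := Nat.mul_le_mul_left n (by omega)
        omega
    refine ⟨S', le_trans Finset.card_image_le hScard, ?_⟩
    intro l hc hm
    have key : ∀ t : List (V × Fin n), t.Chain' (IDREdge E δ γ ord) →
        (∀ x ∈ t, x ∉ S') → (t.map w).Chain' (· < ·) := by
      intro t
      induction t with
      | nil => intro _ _; exact List.isChain_nil
      | cons a t ih =>
        cases t with
        | nil => intro _ _; exact List.isChain_singleton _
        | cons b t' =>
          intro hc hm
          rw [List.Chain', List.isChain_cons_cons] at hc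
          rw [List.map_cons, List.map_cons, List.Chain', List.isChain_cons_cons]
          refine ⟨hwmono _ _ hc.1 (hm a (by simp)) (hm b (by simp)), ?_⟩
          rw [← List.map_cons]
          exact ih hc.2 (fun x hx => hm x (List.mem_cons_of_mem _ hx))
    have hlen : (l.map w).length ≤ n * d - 1 := by
      refine chain_lt_length_le (key l hc hm) ?_
      intro x hx
      obtain ⟨p, hp, rfl⟩ := List.mem_map.mp hx
      exact hwbound p (hm p hp)
    rw [List.length_map] at hlen
    exact lt_of_le_of_lt hlen (Nat.sub_lt (Nat.mul_pos hn1 hd1) one_pos)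
  · simp [Fintype.card_prod, Fintype.card_fin, mul_comm]
  · -- indegree at most 2
    intro q
    by_contra hcon
    push_neg at hcon
    obtain ⟨t, hts, htc⟩ := Set.exists_subset_card_eq (show 3 ≤ {p | IDREdge E δ γ ord p q}.ncard from hcon)
    obtain ⟨x, y, z, hxy, hxz, hyz, rfl⟩ := Set.ncard_eq_three.mp htc
    have hx : IDREdge E δ γ ord x q := hts (by simp)
    have hy : IDREdge E δ γ ord y q := hts (by simp)
    have hz : IDREdge E δ γ ord z q := hts (by simp)
    have huA : ∀ a b : V × Fin (δ + γ), (a.1 = q.1 ∧ (a.2 : ℕ) + 1 = (q.2 : ℕ)) →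
        (b.1 = q.1 ∧ (b.2 : ℕ) + 1 = (q.2 : ℕ)) → a = b := by
      rintro a b ⟨ha1, ha2⟩ ⟨hb1, hb2⟩
      exact Prod.ext (ha1.trans hb1.symm) (Fin.ext (by omega))
    have huB : ∀ a b : V × Fin (δ + γ),
        (E a.1 q.1 ∧ (a.2 : ℕ) = δ + γ - 1 ∧ (q.2 : ℕ) = ord a.1 q.1) →
        (E b.1 q.1 ∧ (b.2 : ℕ) = δ + γ - 1 ∧ (q.2 : ℕ) = ord b.1 q.1) → a = b := by
      rintro a b ⟨ha1, ha2, ha3⟩ ⟨hb1, hb2, hb3⟩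
      have h1 : a.1 = b.1 := hord_inj q.1 ha1 hb1 (by simp [← ha3, ← hb3])
      exact Prod.ext h1 (Fin.ext (by omega))
    rcases hx with hxA | hxB <;> rcases hy with hyA | hyB <;> rcases hz with hzA | hzB
    · exact hxy (huA _ _ hxA hyA)
    · exact hxy (huA _ _ hxA hyA)
    · exact hxz (huA _ _ hxA hzA)
    · exact hyz (huB _ _ hyB hzB)
    · exact hyz (huA _ _ hyA hzA)
    · exact hxz (huB _ _ hxB hzB)
    · exact hxy (huB _ _ hxB hyB)
    · exact hxy (huB _ _ hxB hyB)
end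

section
/- Let G be a directed acyclic graph with N vertices and maximum indegree δ, let γ ≥ 1 be an integer, and let G' = IDR(G,γ). If G is (e,d)-depth robust, then G' is (e, γ·d)-depth robust. -/
/-- Segment of the path through the copy of `v`, from index `a` to the end. -/
def idrSeg {V : Type*} (n : ℕ) (v : V) (a : ℕ) : List (V × Fin n) :=
  ((List.finRange n).drop a).map (fun j => (v, j))

lemma idrSeg_length {V : Type*} (n : ℕ) (v : V) (a : ℕ) :
    (idrSeg n v a).length = n - a := by
  simp [idrSeg]

lemma idrSeg_head? {V : Type*} {n : ℕ} (v : V) {a : ℕ} (ha : a < n) :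
    (idrSeg n v a).head? = some (v, ⟨a, ha⟩) := by
  simp only [idrSeg, List.head?_map, List.head?_drop]
  rw [List.getElem?_eq_getElem (by simpa using ha)]
  simp [List.getElem_finRange, Fin.cast]

lemma idrSeg_getLast? {V : Type*} {n : ℕ} (v : V) {a : ℕ} (ha : a < n) :
    (idrSeg n v a).getLast? = some (v, ⟨n - 1, Nat.sub_lt (Nat.lt_of_le_of_lt (Nat.zero_le a) ha) one_pos⟩) := by
  have hlen : (idrSeg n v a).length = n - a := idrSeg_length n v a
  rw [List.getLast?_eq_getElem?, List.getElem?_eq_getElem (by omega)]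
  simp only [idrSeg, List.getElem_map, List.getElem_drop, List.getElem_finRange]
  congr 1
  ext
  · rfl
  · simp [Fin.cast, hlen]
    omega

lemma idrSeg_mem {V : Type*} {n : ℕ} {v : V} {a : ℕ} {p : V × Fin n}
    (hp : p ∈ idrSeg n v a) : p.1 = v := by
  simp only [idrSeg, List.mem_map] at hp
  obtain ⟨j, -, rfl⟩ := hp
  rfl

lemma idrSeg_chain' {V : Type*} (E : V → V → Prop) (δ γ : ℕ) (ord : V → V → ℕ)
    (v : V) (a : ℕ) :
    List.Chain' (IDREdge E δ γ ord) (idrSeg (δ + γ) v a) := by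
  rw [idrSeg, List.Chain', List.isChain_map, List.isChain_iff_getElem]
  intro i h
  left
  constructor
  · rfl
  · simp only [List.length_drop, List.length_finRange] at h
    simp only [List.get_eq_getElem, List.getElem_drop, List.getElem_finRange, Fin.cast]
    omega

/-- The path in `IDR(G,γ)` corresponding to a path in `G`, where the first
vertex's segment starts at index `a`. -/
def idrBuild {V : Type*} (δ γ : ℕ) (ord : V → V → ℕ) : ℕ → List V → List (V × Fin (δ + γ))
  | _, [] => []
  | a, [v] => idrSeg (δ + γ) v a
  | a, v :: w :: rest => idrSeg (δ + γ) v a ++ idrBuild δ γ ord (ord v w) (w :: rest)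

lemma idrBuild_mem {V : Type*} (δ γ : ℕ) (ord : V → V → ℕ) :
    ∀ (a : ℕ) (l : List V) (p : V × Fin (δ + γ)), p ∈ idrBuild δ γ ord a l → p.1 ∈ l
  | _, [], p, hp => by simp [idrBuild] at hp
  | a, [v], p, hp => by
      simp only [idrBuild] at hp
      simp [idrSeg_mem hp]
  | a, v :: w :: rest, p, hp => by
      simp only [idrBuild, List.mem_append] at hp
      rcases hp with hp | hp
      · simp [idrSeg_mem hp]
      · have := idrBuild_mem δ γ ord (ord v w) (w :: rest) p hp
        simp only [List.mem_cons] at this ⊢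
        tauto

lemma idrBuild_length {V : Type*} (E : V → V → Prop) (δ γ : ℕ) (ord : V → V → ℕ)
    (hord_lt : ∀ u v : V, E u v → ord u v < δ) :
    ∀ (a : ℕ) (l : List V), a ≤ δ → l.Chain' E →
      γ * l.length ≤ (idrBuild δ γ ord a l).length
  | _, [], _, _ => by simp [idrBuild]
  | a, [v], ha, _ => by
      simp only [idrBuild, idrSeg_length, List.length_cons, List.length_nil]
      omega
  | a, v :: w :: rest, ha, hc => by
      have hE : E v w := (List.isChain_cons_cons.mp hc).1
      have hrec := idrBuild_length E δ γ ord hord_lt (ord v w) (w :: rest)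
        (le_of_lt (hord_lt v w hE)) (List.isChain_cons_cons.mp hc).2
      simp only [idrBuild, List.length_append, idrSeg_length, List.length_cons] at *
      have hmul : γ * (rest.length + 1 + 1) = γ * (rest.length + 1) + γ := by ring
      omega

lemma idrBuild_head? {V : Type*} (δ γ : ℕ) (ord : V → V → ℕ) (hγ : 1 ≤ γ)
    (a : ℕ) (ha : a < δ + γ) (v : V) (l : List V) :
    (idrBuild δ γ ord a (v :: l)).head? = some (v, ⟨a, ha⟩) := by
  match l with
  | [] => simpa [idrBuild] using idrSeg_head? v ha
  | w :: rest =>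
      rw [idrBuild, List.head?_append]
      rw [idrSeg_head? v ha]
      rfl

lemma idrBuild_chain' {V : Type*} (E : V → V → Prop) (δ γ : ℕ) (ord : V → V → ℕ)
    (hγ : 1 ≤ γ) (hord_lt : ∀ u v : V, E u v → ord u v < δ) :
    ∀ (a : ℕ), a < δ + γ → ∀ (l : List V), l.Chain' E →
      List.Chain' (IDREdge E δ γ ord) (idrBuild δ γ ord a l)
  | _, _, [], _ => by simp [idrBuild, List.Chain']
  | a, ha, [v], _ => idrSeg_chain' E δ γ ord v a
  | a, ha, v :: w :: rest, hc => by
      have hE : E v w := (List.isChain_cons_cons.mp hc).1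
      have hordw : ord v w < δ + γ := lt_of_lt_of_le (hord_lt v w hE) (Nat.le_add_right _ _)
      rw [idrBuild]
      refine List.IsChain.append (idrSeg_chain' E δ γ ord v a)
        (idrBuild_chain' E δ γ ord hγ hord_lt (ord v w) hordw (w :: rest)
          (List.isChain_cons_cons.mp hc).2) ?_
      intro x hx y hy
      rw [idrSeg_getLast? v ha] at hx
      rw [idrBuild_head? δ γ ord hγ (ord v w) hordw w rest] at hy
      simp only [Option.mem_def, Option.some_inj] at hx hy
      subst hx; subst hy
      right
      exact ⟨hE, rfl, rfl⟩

/-- If `G` is a DAG with `N` vertices and maximum indegree `δ`, `γ ≥ 1`,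
and `G` is `(e,d)`-depth robust, then `G' = IDR(G,γ)` is `(e, γ·d)`-depth robust. -/
theorem idr_depth_robust {V : Type*} [Fintype V] (E : V → V → Prop)
    (δ γ e d : ℕ) (hγ : 1 ≤ γ)
    (hdag : ∀ v : V, ¬ Relation.TransGen E v v)
    (hindeg : ∀ v : V, {u : V | E u v}.ncard ≤ δ)
    (ord : V → V → ℕ)
    (hord_inj : ∀ v : V, Set.InjOn (fun u => ord u v) {u : V | E u v})
    (hord_lt : ∀ u v : V, E u v → ord u v < δ)
    (hrob : ¬ Reducible E e d) :
    ¬ Reducible (IDREdge E δ γ ord) e (γ * d) := by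
  classical
  rintro ⟨S', hS'card, hS'⟩
  apply hrob
  refine ⟨S'.image Prod.fst, le_trans Finset.card_image_le hS'card, ?_⟩
  intro l hchain havoid
  have hδ : δ < δ + γ := by omega
  have hchain' := idrBuild_chain' E δ γ ord hγ hord_lt δ hδ l hchain
  have havoid' : ∀ p ∈ idrBuild δ γ ord δ l, p ∉ S' := by
    intro p hp hpS'
    exact havoid p.1 (idrBuild_mem δ γ ord δ l p hp)
      (Finset.mem_image_of_mem Prod.fst hpS')
  have hlen := hS' _ hchain' havoid'
  have hge := idrBuild_length E δ γ ord hord_lt δ l le_rfl hchain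
  have : γ * l.length < γ * d := lt_of_le_of_lt hge hlen
  exact lt_of_mul_lt_mul_left this (Nat.zero_le γ)
end

section
/- Let 0 < γ < 1 and let G be a γ-extreme depth-robust DAG with N vertices. Then for every subset U of the vertices of G, the induced subgraph G[U] contains a directed path visiting at least |U| − γN vertices. -/
/-- `G` is `(e,d)`-reducible (real-valued parameters): there is a set `S` of at most
`e` vertices such that every directed path avoiding `S` has fewer than `d` vertices;
`G` is `(e,d)`-depth robust iff it is not `(e,d)`-reducible. -/
def ReducibleR {V : Type*} (E : V → V → Prop) (e d : ℝ) : Prop :=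
  ∃ S : Finset V, (S.card : ℝ) ≤ e ∧
    ∀ l : List V, l.Chain' E → (∀ v ∈ l, v ∉ S) → (l.length : ℝ) < d


/-!
Delete the `N - |U|` vertices outside `U`, plus a little slack: by depth robustness the
remaining graph `G[U]` still has a path with more than `|U| - γN - ε` vertices. As path
lengths are integers, a small enough `ε` gives the bound `|U| - γN` itself.
-/

theorem exists_le_natCast_of_forall_lt {α : Type*} {p : α → Prop} (f : α → ℕ) {t : ℝ}
    (ht : 0 < t) (h : ∀ d : ℝ, 0 < d → d < t → ∃ a, p a ∧ d ≤ f a) :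
    ∃ a, p a ∧ t ≤ f a := by
  -- `m` is the largest natural number strictly below `t`.
  set m := ⌈t⌉₊ - 1
  have hceil : 0 < ⌈t⌉₊ := Nat.ceil_pos.mpr ht
  have hm : (m : ℝ) < t := Nat.lt_ceil.mp (by omega)
  obtain ⟨d, hmd, hdt⟩ := exists_between hm
  obtain ⟨a, hpa, hda⟩ := h d (lt_of_le_of_lt m.cast_nonneg hmd) hdt
  have : m < f a := by exact_mod_cast hmd.trans_le hda
  exact ⟨a, hpa, Nat.ceil_le.mp (by omega)⟩

theorem exists_chain_avoiding_of_not_reducibleR {V : Type*} {E : V → V → Prop} {e d : ℝ}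
    (h : ¬ ReducibleR E e d) (S : Finset V) (hS : (S.card : ℝ) ≤ e) :
    ∃ l : List V, l.IsChain E ∧ (∀ v ∈ l, v ∉ S) ∧ d ≤ l.length := by
  unfold ReducibleR at h
  push Not at h
  exact h S hS

theorem exists_chain_subset_of_not_reducibleR {V : Type*} [Fintype V] {E : V → V → Prop}
    {e d : ℝ} (h : ¬ ReducibleR E e d) (U : Finset V)
    (hU : (Fintype.card V : ℝ) - U.card ≤ e) :
    ∃ l : List V, l.IsChain E ∧ (∀ v ∈ l, v ∈ U) ∧ d ≤ l.length := by
  classical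
  have hcompl : ((Uᶜ).card : ℝ) = Fintype.card V - U.card := by
    rw [Finset.card_compl, Nat.cast_sub U.card_le_univ]
  obtain ⟨l, hchain, havoid, hlen⟩ :=
    exists_chain_avoiding_of_not_reducibleR h Uᶜ (hcompl ▸ hU)
  exact ⟨l, hchain, fun v hv => by simpa using havoid v hv, hlen⟩

theorem extreme_depth_robust_induced_path_general {V : Type*} [Fintype V]
    (E : V → V → Prop) (γ : ℝ)
    (hextreme : ∀ e d : ℝ, 0 < e → 0 < d →
      e + d ≤ (1 - γ) * (Fintype.card V : ℝ) → ¬ ReducibleR E e d) :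
    ∀ U : Finset V, ∃ l : List V, l.Chain' E ∧ (∀ v ∈ l, v ∈ U) ∧
      (U.card : ℝ) - γ * (Fintype.card V : ℝ) ≤ (l.length : ℝ) := by
  intro U
  have hUN : (U.card : ℝ) ≤ Fintype.card V := by exact_mod_cast U.card_le_univ
  set N : ℝ := (Fintype.card V : ℝ)
  rcases le_or_gt ((U.card : ℝ) - γ * N) 0 with hle | hpos
  · exact ⟨[], List.isChain_nil, by simp, by simpa using hle⟩
  obtain ⟨l, ⟨hchain, hlU⟩, hlen⟩ := exists_le_natCast_of_forall_lt
      (p := fun l : List V => l.IsChain E ∧ ∀ v ∈ l, v ∈ U) List.length hpos fun d hd hdt => by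
    have hred := hextreme (N - U.card + (U.card - γ * N - d)) d (by linarith) hd (by linarith)
    obtain ⟨l, hchain, hlU, hlen⟩ := exists_chain_subset_of_not_reducibleR hred U (by linarith)
    exact ⟨l, ⟨hchain, hlU⟩, hlen⟩
  exact ⟨l, hchain, hlU, hlen⟩

/-- Let `0 < γ < 1` and let `G` be a `γ`-extreme depth-robust DAG with
`N` vertices (i.e. `G` is `(e,d)`-depth robust for all `e, d > 0` with
`e + d ≤ (1-γ)·N`).  Then for every subset `U` of the vertices, the induced subgraph
`G[U]` contains a directed path visiting at least `|U| - γ·N` vertices. -/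
theorem extreme_depth_robust_induced_path {V : Type*} [Fintype V]
    (E : V → V → Prop) (γ : ℝ) (hγ0 : 0 < γ) (hγ1 : γ < 1)
    (hdag : ∀ v : V, ¬ Relation.TransGen E v v)
    (hextreme : ∀ e d : ℝ, 0 < e → 0 < d →
      e + d ≤ (1 - γ) * (Fintype.card V : ℝ) → ¬ ReducibleR E e d) :
    ∀ U : Finset V, ∃ l : List V, l.Chain' E ∧ (∀ v ∈ l, v ∈ U) ∧
      (U.card : ℝ) - γ * (Fintype.card V : ℝ) ≤ (l.length : ℝ) :=
  extreme_depth_robust_induced_path_general E γ hextreme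
end

section
/- Let G be a DAG with M vertices and let S be a set of vertices with depth(G−S) ≤ D. For 0 ≤ i ≤ D define Q_i = S ∪ {v ∉ S : depth(v, G−S) ≤ i}, where depth(v, G−S) is the maximum number of vertices on a directed path in G−S ending at v. Then Q_0 = S, Q_D = V, the sequence (Q_0, Q_1, …, Q_D) obeys the parallel pebbling rule (for every i ≥ 1 and every v ∈ Q_i ∖ Q_{i−1}, all parents of v in G lie in Q_{i−1}), and Σ_{i=1}^{D} |Q_i| ≤ M·D. In particular, starting from any pebbling configuration containing S, one can legally place pebbles on all vertices of G within D rounds at cumulative cost at most M·D. -/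
/-- `depth(v, G−S) ≤ i`: every directed path in `G − S` ending at `v` has at most
`i` vertices. -/
def vDepthLE {V : Type*} (E : V → V → Prop) (S : Set V) (v : V) (i : ℕ) : Prop :=
  ∀ l : List V, l.Chain' E → (∀ u ∈ l, u ∉ S) → l.getLast? = some v → l.length ≤ i

/-- The configuration `Q_i = S ∪ {v ∉ S : depth(v, G−S) ≤ i}`. -/
def Qset {V : Type*} (E : V → V → Prop) (S : Set V) (i : ℕ) : Set V :=
  S ∪ {v | v ∉ S ∧ vDepthLE E S v i}

/-- Let `G` be a DAG with `M` vertices and `S` a set of vertices with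
`depth(G−S) ≤ D`.  With `Q_i = S ∪ {v ∉ S : depth(v, G−S) ≤ i}` we have `Q_0 = S`,
`Q_D = V`, the sequence `(Q_0, …, Q_D)` obeys the parallel pebbling rule (every vertex
newly added at round `i` has all of its parents in `Q_{i-1}`), and
`Σ_{i=1}^{D} |Q_i| ≤ M·D`. -/
theorem pebble_from_depth_reducing_set {V : Type*} [Fintype V]
    (E : V → V → Prop) (S : Set V) (D : ℕ)
    (hdag : ∀ v : V, ¬ Relation.TransGen E v v)
    (hdepth : ∀ l : List V, l.Chain' E → (∀ u ∈ l, u ∉ S) → l.length ≤ D) :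
    Qset E S 0 = S ∧
    Qset E S D = Set.univ ∧
    (∀ i : ℕ, 1 ≤ i → ∀ v ∈ Qset E S i, v ∉ Qset E S (i - 1) →
      ∀ u : V, E u v → u ∈ Qset E S (i - 1)) ∧
    ∑ i ∈ Finset.Icc 1 D, (Qset E S i).ncard ≤ Fintype.card V * D := by
  refine ⟨?_, ?_, ?_, ?_⟩
  · ext v
    simp only [Qset, Set.mem_union, Set.mem_setOf_eq]
    constructor
    · rintro (h | ⟨hv, hd⟩)
      · exact h
      · exact absurd (hd [v] (List.isChain_singleton v) (by simpa) rfl) (by simp)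
    · exact Or.inl
  · ext v
    simp only [Qset, Set.mem_union, Set.mem_setOf_eq, Set.mem_univ, iff_true]
    by_cases hv : v ∈ S
    · exact Or.inl hv
    · exact Or.inr ⟨hv, fun l hc hns _ => hdepth l hc hns⟩
  · intro i hi v hv hv' u huv
    have hvS : v ∉ S := fun h => hv' (Or.inl h)
    have hvd : vDepthLE E S v i := by
      rcases hv with h | h
      · exact absurd h hvS
      · exact h.2
    by_cases huS : u ∈ S
    · exact Or.inl huS
    · refine Or.inr ⟨huS, fun l hc hns hl => ?_⟩
      have hlv : (l ++ [v]).getLast? = some v := by simp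
      have hcv : (l ++ [v]).Chain' E := by
        rw [List.Chain', List.isChain_append]
        refine ⟨hc, List.isChain_singleton v, ?_⟩
        intro x hx y hy
        simp only [List.head?_cons, Option.mem_some_iff] at hy
        subst hy
        rw [hl] at hx
        simp only [Option.mem_some_iff] at hx
        subst hx
        exact huv
      have hle := hvd (l ++ [v]) hcv
        (by
          intro x hx
          rcases List.mem_append.1 hx with h | h
          · exact hns x h
          · simp only [List.mem_singleton] at h; exact h ▸ hvS) hlv
      simp only [List.length_append, List.length_singleton] at hle
      omega
  · calc ∑ i ∈ Finset.Icc 1 D, (Qset E S i).ncard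
        ≤ ∑ _i ∈ Finset.Icc 1 D, Fintype.card V := by
          refine Finset.sum_le_sum fun i _ => ?_
          have := Set.ncard_le_ncard (Set.subset_univ (Qset E S i)) Set.finite_univ
          simpa [Set.ncard_univ, Nat.card_eq_fintype_card] using this
      _ = Fintype.card V * D := by simp [Nat.card_Icc, mul_comm]
end

section
/- Let H be a DAG whose vertex set is partitioned into two sets B and T such that every edge of H goes either from a vertex of B to a vertex of T or from a vertex of T to a vertex of B, and such that every vertex of T has at least one in-neighbor in B. Let G be the DAG on vertex set T with an edge (u,v) whenever there exists b ∈ B with (u,b) and (b,v) both edges of H. Then for every subset S ⊆ T, depth(G−S) ≤ depth_B(H−S) ≤ depth(G−S) + 1, where depth(G−S) is the maximum number of vertices on any directed path in G−S and depth_B(H−S) is the maximum number of B-vertices contained in any directed path in H−S. -/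
/-- `depth(G − S)`: the maximum number of vertices on a directed path of the graph
with edge relation `E` that avoids the vertex set `S`. -/
noncomputable def depthAvoiding {X : Type*} (E : X → X → Prop) (S : Set X) : ℕ :=
  sSup {n | ∃ l : List X, l.Chain' E ∧ (∀ v ∈ l, v ∉ S) ∧ l.length = n}

/-- `depth_B(H − S)`: the maximum number of `B`-vertices on a directed path of the
graph with edge relation `H` that avoids the vertex set `S`. -/
noncomputable def depthB {X : Type*} [DecidableEq X] (H : X → X → Prop)
    (B S : Finset X) : ℕ :=
  sSup {n | ∃ l : List X, l.Chain' H ∧ (∀ v ∈ l, v ∉ S) ∧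
    l.countP (fun x => decide (x ∈ B)) = n}

section Aux
set_option linter.unusedSectionVars false

variable {X : Type*} [Fintype X] [DecidableEq X]

/-- A chain of an acyclic relation has no duplicates. -/
lemma nodup_of_chain'_acyclic {R : X → X → Prop} (h : ∀ v, ¬ Relation.TransGen R v v)
    {l : List X} (hc : l.Chain' R) : l.Nodup := by
  have h2 : l.Chain' (Relation.TransGen R) := hc.imp (fun a b hab => .single hab)
  have : IsTrans X (Relation.TransGen R) := ⟨fun _ _ _ => Relation.TransGen.trans⟩
  have hp := List.isChain_iff_pairwise.mp h2
  exact hp.imp (fun hab => by rintro rfl; exact h _ hab)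

/-- From a `G`-chain starting at `v`, build an `H`-chain starting at `v` with
`rest.length` many `B`-vertices. -/
lemma buildH {H : X → X → Prop} {B S : Finset X} (hBS : ∀ v ∈ S, v ∉ B) :
    ∀ (rest : List X) (v : X),
      List.Chain' (fun u v => ∃ b ∈ B, H u b ∧ H b v) (v :: rest) →
      (∀ u ∈ v :: rest, u ∉ (↑B ∪ ↑S : Set X)) →
      ∃ m : List X, List.Chain' H (v :: m) ∧ (∀ u ∈ v :: m, u ∉ S) ∧
        (v :: m).countP (fun x => decide (x ∈ B)) = rest.length := by
  intro rest
  induction rest with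
  | nil =>
    intro v _ hav
    have hv := hav v (by simp)
    simp only [Set.mem_union, Finset.mem_coe] at hv
    push_neg at hv
    refine ⟨[], List.isChain_singleton v, ?_, ?_⟩
    · intro u hu; simp at hu; subst hu; exact hv.2
    · simp [hv.1]
  | cons w rest ih =>
    intro v hc hav
    obtain ⟨⟨b, hbB, hvb, hbw⟩, hc'⟩ := List.isChain_cons_cons.mp hc
    obtain ⟨m, hm, hmS, hmc⟩ := ih w hc' (fun u hu => hav u (by simp at hu ⊢; tauto))
    have hv := hav v (by simp)
    simp only [Set.mem_union, Finset.mem_coe] at hv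
    push_neg at hv
    refine ⟨b :: w :: m, ?_, ?_, ?_⟩
    · exact List.isChain_cons_cons.mpr ⟨hvb, List.isChain_cons_cons.mpr ⟨hbw, hm⟩⟩
    · intro u hu
      rcases List.mem_cons.mp hu with rfl | hu
      · exact hv.2
      rcases List.mem_cons.mp hu with rfl | hu
      · intro huS; exact hBS u huS hbB
      · exact hmS u hu
    · simp only [List.countP_cons, hmc, hv.1, hbB]
      simp [hv.1, hbB]

/-- The non-`B` vertices of an `H`-chain form a `G`-chain. -/
lemma filterChain {H : X → X → Prop} {B : Finset X}
    (hbip : ∀ u v : X, H u v → ((u ∈ B ∧ v ∉ B) ∨ (u ∉ B ∧ v ∈ B))) :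
    ∀ l : List X, List.Chain' H l →
      List.Chain' (fun u v => ∃ b ∈ B, H u b ∧ H b v)
        (l.filter (fun x => decide (x ∉ B))) := by
  have key : ∀ (n : ℕ) (l : List X), l.length ≤ n → List.Chain' H l →
      List.Chain' (fun u v => ∃ b ∈ B, H u b ∧ H b v)
        (l.filter (fun x => decide (x ∉ B))) := by
    intro n
    induction n with
    | zero =>
      intro l hl _
      have : l = [] := List.length_eq_zero_iff.mp (Nat.le_zero.mp hl)
      subst this; simp [List.Chain']
    | succ n ih =>
      intro l hl hc
      match l with
      | [] => simp [List.Chain']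
      | [x] =>
        by_cases hx : x ∈ B <;> simp [hx, List.Chain']
      | x :: y :: rest =>
        obtain ⟨hxy, hc'⟩ := List.isChain_cons_cons.mp hc
        have hlen : (y :: rest).length ≤ n := by simp at hl ⊢; omega
        by_cases hx : x ∈ B
        · -- x ∈ B, so x is filtered out
          have := ih (y :: rest) hlen hc'
          rwa [List.filter_cons_of_neg (by simp [hx])]
        · -- x ∉ B, so y ∈ B and y is filtered out
          have hy : y ∈ B := by rcases hbip x y hxy with ⟨h1, _⟩ | ⟨_, h2⟩ <;> tauto
          have htail := ih (y :: rest) hlen hc'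
          rw [List.filter_cons_of_neg (by simp [hy])] at htail
          rw [List.filter_cons_of_pos (by simp [hx]),
            List.filter_cons_of_neg (by simp [hy])]
          match rest, hc', htail with
          | [], _, _ => simp [List.Chain']
          | z :: rest', hc', htail =>
            obtain ⟨hyz, hc''⟩ := List.isChain_cons_cons.mp hc'
            have hz : z ∉ B := by rcases hbip y z hyz with ⟨_, h2⟩ | ⟨h1, _⟩ <;> tauto
            rw [List.filter_cons_of_pos (by simp [hz])] at htail ⊢
            exact List.isChain_cons_cons.mpr ⟨⟨y, hy, hxy, hyz⟩, htail⟩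
  intro l hc
  exact key l.length l le_rfl hc

/-- Along an `H`-chain, the number of `B`-vertices is at most the number of
non-`B`-vertices plus one. -/
lemma countLe {H : X → X → Prop} {B : Finset X}
    (hbip : ∀ u v : X, H u v → ((u ∈ B ∧ v ∉ B) ∨ (u ∉ B ∧ v ∈ B))) :
    ∀ l : List X, List.Chain' H l →
      l.countP (fun x => decide (x ∈ B)) ≤ l.countP (fun x => decide (x ∉ B)) + 1 := by
  have key : ∀ (n : ℕ) (l : List X), l.length ≤ n → List.Chain' H l →
      l.countP (fun x => decide (x ∈ B)) ≤ l.countP (fun x => decide (x ∉ B)) + 1 := by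
    intro n
    induction n with
    | zero =>
      intro l hl _
      have : l = [] := List.length_eq_zero_iff.mp (Nat.le_zero.mp hl)
      subst this; simp
    | succ n ih =>
      intro l hl hc
      match l with
      | [] => simp
      | [x] => by_cases hx : x ∈ B <;> simp [hx]
      | x :: y :: rest =>
        obtain ⟨hxy, hc'⟩ := List.isChain_cons_cons.mp hc
        have hlen : rest.length ≤ n := by simp at hl; omega
        have hrest := ih rest hlen hc'.tail
        have h1 : (x ∈ B ∧ y ∉ B) ∨ (x ∉ B ∧ y ∈ B) := hbip x y hxy
        simp only [decide_not] at hrest ⊢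
        rcases h1 with ⟨hx, hy⟩ | ⟨hx, hy⟩ <;> simp [List.countP_cons, hx, hy] <;> omega
  intro l hc
  exact key l.length l le_rfl hc

end Aux

/-- Let `H` be a DAG whose vertices are partitioned into `B` and
`T = Bᶜ`, all edges going between `B` and `T`, such that every vertex of `T` has an
in-neighbor in `B`.  Let `G` be the DAG on `T` with an edge `(u,v)` whenever some
`b ∈ B` has `(u,b)` and `(b,v)` edges of `H`.  Then for every `S ⊆ T`,
`depth(G−S) ≤ depth_B(H−S) ≤ depth(G−S) + 1`.  (Paths of `G` are paths of `H`'s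
compression avoiding both `B` and `S`.) -/
theorem depth_test_vs_bit {X : Type*} [Fintype X] [DecidableEq X]
    (H : X → X → Prop) (B : Finset X)
    (hdag : ∀ v : X, ¬ Relation.TransGen H v v)
    (hbip : ∀ u v : X, H u v → ((u ∈ B ∧ v ∉ B) ∨ (u ∉ B ∧ v ∈ B)))
    (hin : ∀ v : X, v ∉ B → ∃ b ∈ B, H b v) :
    ∀ S : Finset X, (∀ v ∈ S, v ∉ B) →
      depthAvoiding (fun u v => ∃ b ∈ B, H u b ∧ H b v) (↑B ∪ ↑S) ≤ depthB H B S ∧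
      depthB H B S ≤ depthAvoiding (fun u v => ∃ b ∈ B, H u b ∧ H b v) (↑B ∪ ↑S) + 1 := by
  intro S hBS
  set E : X → X → Prop := fun u v => ∃ b ∈ B, H u b ∧ H b v with hE
  have hEdag : ∀ v, ¬ Relation.TransGen E v v := by
    intro v hv
    apply hdag v
    have hle : ∀ a b, E a b → Relation.TransGen H a b := by
      rintro a b ⟨c, _, hac, hcb⟩
      exact Relation.TransGen.head hac (Relation.TransGen.single hcb)
    have := Relation.TransGen.mono (r := E) hle _ _ hv
    rwa [Relation.transGen_idem] at this
  -- the two defining sets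
  set A : Set ℕ := {n | ∃ l : List X, l.Chain' E ∧ (∀ v ∈ l, v ∉ (↑B ∪ ↑S : Set X)) ∧
    l.length = n} with hA
  set D : Set ℕ := {n | ∃ l : List X, l.Chain' H ∧ (∀ v ∈ l, v ∉ S) ∧
    l.countP (fun x => decide (x ∈ B)) = n} with hD
  have hAne : A.Nonempty := ⟨0, [], by simp [List.Chain']⟩
  have hDne : D.Nonempty := ⟨0, [], by simp [List.Chain']⟩
  have hAbdd : BddAbove A := by
    refine ⟨Fintype.card X, fun n hn => ?_⟩
    obtain ⟨l, hc, _, hlen⟩ := hn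
    calc n = l.length := hlen.symm
      _ ≤ Fintype.card X := (nodup_of_chain'_acyclic hEdag hc).length_le_card
  have hDbdd : BddAbove D := by
    refine ⟨Fintype.card X, fun n hn => ?_⟩
    obtain ⟨l, hc, _, hcount⟩ := hn
    calc n = l.countP _ := hcount.symm
      _ ≤ l.length := List.countP_le_length
      _ ≤ Fintype.card X := (nodup_of_chain'_acyclic hdag hc).length_le_card
  have hAD : depthAvoiding E (↑B ∪ ↑S) = sSup A := rfl
  have hDD : depthB H B S = sSup D := rfl
  constructor
  · -- depthAvoiding ≤ depthB
    rw [hAD, hDD]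
    apply csSup_le hAne
    rintro n ⟨l, hc, hav, rfl⟩
    match l with
    | [] => simp
    | v :: rest =>
      obtain ⟨m, hm, hmS, hmc⟩ := buildH hBS rest v hc hav
      have hv : v ∉ B := by
        have := hav v (by simp)
        simp only [Set.mem_union, Finset.mem_coe] at this; tauto
      obtain ⟨b, hbB, hbv⟩ := hin v hv
      refine le_csSup hDbdd ⟨b :: v :: m, ?_, ?_, ?_⟩
      · exact List.isChain_cons_cons.mpr ⟨hbv, hm⟩
      · intro u hu
        rcases List.mem_cons.mp hu with rfl | hu
        · intro huS; exact hBS u huS hbB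
        · exact hmS u hu
      · simp only [List.countP_cons, hmc, hbB]
        simp [hbB]
  · -- depthB ≤ depthAvoiding + 1
    rw [hAD, hDD]
    apply csSup_le hDne
    rintro k ⟨l, hc, hav, rfl⟩
    have h1 := countLe hbip l hc
    have h2 := filterChain hbip l hc
    have h3 : (l.filter (fun x => decide (x ∉ B))).length
        = l.countP (fun x => decide (x ∉ B)) := List.countP_eq_length_filter.symm
    have h4 : l.countP (fun x => decide (x ∉ B)) ∈ A := by
      refine ⟨l.filter (fun x => decide (x ∉ B)), h2, ?_, h3⟩
      intro v hv
      have hvl := List.mem_of_mem_filter hv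
      have hvB : v ∉ B := by
        have := List.of_mem_filter hv
        simpa using this
      simp only [Set.mem_union, Finset.mem_coe]
      push_neg
      exact ⟨hvB, hav v hvl⟩
    have h5 : l.countP (fun x => decide (x ∉ B)) ≤ sSup A := le_csSup hAbdd h4
    omega
end
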